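/- arXiv:2107.02172 — 2 statements merged into one kernel-verified Lean document; each statement's English description precedes it below -/
import Mathlib

section
/- Let u ∈ ℝ^q and let B be a positive definite symmetric bilinear form on ℝ^q. Define ν(w) = ⟨w, u⟩ / √(B(w,w)) for w ∈ ℝ^q \ {0}. If w₁, w₂ ∈ ℝ^q are linearly independent with ν(w₁) > 0 and ν(w₂) > 0, then for every t ∈ (0,1), ν(t w₁ + (1−t) w₂) > min(ν(w₁), ν(w₂)). -/
/-! `w ↦ √(B w w)` satisfies a triangle inequality that is strict on linearly independent
vectors (strict Cauchy–Schwarz), and `ν` is invariant under positive scaling. Writing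
`t w₁ + (1 - t) w₂ = x + y` with `x = t w₁`, `y = (1 - t) w₂` and `m = min (ν x) (ν y) > 0`,
`⟨x + y, u⟩ = ν x √(B x x) + ν y √(B y y) ≥ m (√(B x x) + √(B y y)) > m √(B (x + y) (x + y))`. -/

namespace LinearMap.BilinForm

variable {V : Type*} [AddCommGroup V] [Module ℝ V] {B : LinearMap.BilinForm ℝ V}

theorem apply_self_nonneg (hB : ∀ x, x ≠ 0 → 0 < B x x) (x : V) : 0 ≤ B x x := by
  rcases eq_or_ne x 0 with rfl | hx
  · simp
  · exact (hB x hx).le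

/-- Strict Cauchy–Schwarz for the symmetric form `B + B.flip`, whose quadratic form is twice
that of `B`. -/
theorem apply_add_apply_lt_two_mul_sqrt (hB : ∀ x, x ≠ 0 → 0 < B x x) {x y : V}
    (hxy : LinearIndependent ℝ ![x, y]) :
    B x y + B y x < 2 * (√(B x x) * √(B y y)) := by
  have hS : ∀ z, z ≠ 0 → 0 < (B + B.flip) z z := fun z hz ↦ by
    simpa using add_pos (hB z hz) (hB z hz)
  have hcs := ((B + B.flip).apply_mul_apply_lt_iff_linearIndependent hS x y).mpr hxy
  simp only [add_apply, flip_apply, add_comm (B y x)] at hcs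
  refine lt_of_abs_lt (abs_lt_of_sq_lt_sq ?_ (by positivity))
  rw [mul_pow, mul_pow, Real.sq_sqrt (apply_self_nonneg hB x),
    Real.sq_sqrt (apply_self_nonneg hB y)]
  linarith

theorem sqrt_apply_add_lt (hB : ∀ x, x ≠ 0 → 0 < B x x) {x y : V}
    (hxy : LinearIndependent ℝ ![x, y]) :
    √(B (x + y) (x + y)) < √(B x x) + √(B y y) := by
  have hx : 0 < B x x := hB x (by simpa using hxy.ne_zero 0)
  rw [Real.sqrt_lt' (by positivity), add_sq, Real.sq_sqrt hx.le,
    Real.sq_sqrt (apply_self_nonneg hB y)]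
  have := apply_add_apply_lt_two_mul_sqrt hB hxy
  simp only [map_add, LinearMap.add_apply]
  linarith

end LinearMap.BilinForm

theorem min_div_lt_add_div {a b c d e : ℝ} (hb : 0 < b) (hd : 0 < d)
    (hm : 0 < min (a / b) (c / d)) (he : 0 < e) (hlt : e < b + d) :
    min (a / b) (c / d) < (a + c) / e := by
  set m := min (a / b) (c / d)
  have ha : m * b ≤ a := (le_div_iff₀ hb).mp (min_le_left _ _)
  have hc : m * d ≤ c := (le_div_iff₀ hd).mp (min_le_right _ _)
  rw [lt_div_iff₀ he]
  nlinarith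

section NormalizedValue

variable {V : Type*} [AddCommGroup V] [Module ℝ V]

noncomputable def normalizedValue (ℓ : V →ₗ[ℝ] ℝ) (B : LinearMap.BilinForm ℝ V) (w : V) : ℝ :=
  ℓ w / √(B w w)

variable {ℓ : V →ₗ[ℝ] ℝ} {B : LinearMap.BilinForm ℝ V}

theorem normalizedValue_smul_of_pos {c : ℝ} (hc : 0 < c) (w : V) :
    normalizedValue ℓ B (c • w) = normalizedValue ℓ B w := by
  have hsqrt : √(B (c • w) (c • w)) = c * √(B w w) := by
    simp only [map_smul, LinearMap.smul_apply, smul_eq_mul]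
    rw [← mul_assoc, Real.sqrt_mul (mul_self_nonneg c), Real.sqrt_mul_self hc.le]
  rw [normalizedValue, normalizedValue, hsqrt, map_smul, smul_eq_mul,
    mul_div_mul_left _ _ hc.ne']

theorem min_normalizedValue_lt_add (hB : ∀ x, x ≠ 0 → 0 < B x x) {x y : V}
    (hxy : LinearIndependent ℝ ![x, y]) (hx : 0 < normalizedValue ℓ B x)
    (hy : 0 < normalizedValue ℓ B y) :
    min (normalizedValue ℓ B x) (normalizedValue ℓ B y) < normalizedValue ℓ B (x + y) := by
  have hsqrt_pos {z : V} (hz : z ≠ 0) : 0 < √(B z z) := Real.sqrt_pos.mpr (hB z hz)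
  have hsum : x + y ≠ 0 := fun h ↦
    one_ne_zero (LinearIndependent.pair_iff.mp hxy 1 1 (by simpa using h)).1
  simp only [normalizedValue]
  rw [map_add ℓ]
  exact min_div_lt_add_div (hsqrt_pos (by simpa using hxy.ne_zero 0))
    (hsqrt_pos (by simpa using hxy.ne_zero 1)) (lt_min hx hy) (hsqrt_pos hsum)
    (LinearMap.BilinForm.sqrt_apply_add_lt hB hxy)

theorem min_normalizedValue_lt_convexCombination (hB : ∀ x, x ≠ 0 → 0 < B x x) {x y : V}
    (hxy : LinearIndependent ℝ ![x, y]) (hx : 0 < normalizedValue ℓ B x)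
    (hy : 0 < normalizedValue ℓ B y) {t : ℝ} (ht : t ∈ Set.Ioo (0 : ℝ) 1) :
    min (normalizedValue ℓ B x) (normalizedValue ℓ B y) <
      normalizedValue ℓ B (t • x + (1 - t) • y) := by
  obtain ⟨ht₀, ht₁⟩ := ht
  have hs : 0 < 1 - t := sub_pos.mpr ht₁
  rw [← normalizedValue_smul_of_pos ht₀] at hx
  rw [← normalizedValue_smul_of_pos hs] at hy
  rw [← normalizedValue_smul_of_pos ht₀ x, ← normalizedValue_smul_of_pos hs y]
  exact min_normalizedValue_lt_add hB
    ((LinearIndependent.pair_smul_smul_iff ht₀.ne'.isUnit hs.ne'.isUnit).mpr hxy) hx hy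

end NormalizedValue

theorem strict_quasiconcavity_general (q : ℕ) (u : Fin q → ℝ)
    (B : (Fin q → ℝ) →ₗ[ℝ] (Fin q → ℝ) →ₗ[ℝ] ℝ)
    (hBpos : ∀ w : Fin q → ℝ, w ≠ 0 → 0 < B w w)
    (ν : (Fin q → ℝ) → ℝ)
    (hν : ∀ w, ν w = (∑ i, w i * u i) / Real.sqrt (B w w))
    (w₁ w₂ : Fin q → ℝ) (hind : LinearIndependent ℝ ![w₁, w₂])
    (h₁ : 0 < ν w₁) (h₂ : 0 < ν w₂)
    (t : ℝ) (ht : t ∈ Set.Ioo (0 : ℝ) 1) :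
    min (ν w₁) (ν w₂) < ν (t • w₁ + (1 - t) • w₂) := by
  obtain rfl : ν = normalizedValue ((dotProductBilin ℝ ℝ).flip u) B := funext hν
  exact min_normalizedValue_lt_convexCombination hBpos hind h₁ h₂ ht

/-- Strict quasi-concavity of `ν(w) = ⟨w,u⟩/√(B(w,w))` on the locus where it is
positive: for a positive definite symmetric bilinear form `B` on `ℝ^q` and
linearly independent `w₁, w₂` with `ν(w₁), ν(w₂) > 0`, one has
`ν(t w₁ + (1−t) w₂) > min(ν(w₁), ν(w₂))` for all `t ∈ (0,1)`. -/
theorem strict_quasiconcavity (q : ℕ) (u : Fin q → ℝ)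
    (B : (Fin q → ℝ) →ₗ[ℝ] (Fin q → ℝ) →ₗ[ℝ] ℝ)
    (hBsymm : ∀ v w, B v w = B w v)
    (hBpos : ∀ w : Fin q → ℝ, w ≠ 0 → 0 < B w w)
    (ν : (Fin q → ℝ) → ℝ)
    (hν : ∀ w, ν w = (∑ i, w i * u i) / Real.sqrt (B w w))
    (w₁ w₂ : Fin q → ℝ) (hind : LinearIndependent ℝ ![w₁, w₂])
    (h₁ : 0 < ν w₁) (h₂ : 0 < ν w₂)
    (t : ℝ) (ht : t ∈ Set.Ioo (0 : ℝ) 1) :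
    min (ν w₁) (ν w₂) < ν (t • w₁ + (1 - t) • w₂) :=
  strict_quasiconcavity_general q u B hBpos ν hν w₁ w₂ hind h₁ h₂ t ht
end

section
/- Fix an ordered real vector space V (e.g. ℝ[n] with the eventual-comparison order). Consider data consisting of: positive reals R_0, …, R_N (ranks of graded pieces), elements q_0, …, q_N ∈ V (reduced Hilbert polynomials of graded pieces), strictly increasing real weights w_0 < w_1 < … < w_N, and the total average q̄ = (Σ_h R_h q_h)/(Σ_h R_h). Define ν = (Σ_h w_h·(q_h − q̄)·R_h)/√(Σ_h w_h² R_h). Suppose ν ≥ 0 in V and that for some index i one has q_{i+1} ≤ q_i. Form the merged data with the pieces i and i+1 combined: ranks R_0, …, R_{i−1}, R_i + R_{i+1}, R_{i+2}, …, merged polynomial (R_i q_i + R_{i+1} q_{i+1})/(R_i + R_{i+1}), and weights R·w_h for h ∉ {i, i+1} and R_i w_i + R_{i+1} w_{i+1} for the merged piece, where R = R_i + R_{i+1}. Let ν' be the corresponding invariant of the merged data. Then ν' ≥ ν. -/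
/-! Merging the pieces `i, i + 1` multiplies every other weight by `t = R i + R (i + 1)`.
Writing `ν = (√b)⁻¹ • L`, the merged data has
`L' = t • L + (R i * R (i + 1) * (w (i + 1) - w i)) • (q i - q (i + 1)) ≥ t • L` and
`b' = t ^ 2 * b - t * R i * R (i + 1) * (w (i + 1) - w i) ^ 2 ≤ t ^ 2 * b`, so for `L ≥ 0`
we get `(√b)⁻¹ • L ≤ (√b')⁻¹ • (t • L) ≤ (√b')⁻¹ • L'`. If `b' = 0` all merged weights vanish,
so `L' = 0 = ν'`, and then `t • L ≤ 0` forces `ν ≤ 0`. -/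

/-- The ordered-scalar-multiplication class `OrderedSMul` of the older Mathlib, restated verbatim. -/
class OrderedSMul (R M : Type*) [Semiring R] [PartialOrder R] [AddCommMonoid M] [PartialOrder M]
    [SMulWithZero R M] : Prop where
  protected smul_lt_smul_of_pos : ∀ {a b : M} {c : R}, a < b → 0 < c → c • a < c • b
  protected lt_of_smul_lt_smul_of_pos : ∀ {a b : M} {c : R}, c • a < c • b → 0 < c → a < b

open Finset

instance OrderedSMul.toPosSMulStrictMono {R M : Type*} [Semiring R] [PartialOrder R]
    [AddCommMonoid M] [PartialOrder M] [SMulWithZero R M] [OrderedSMul R M] :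
    PosSMulStrictMono R M :=
  ⟨fun _ hc _ _ hab => OrderedSMul.smul_lt_smul_of_pos hab hc⟩

theorem sum_range_merge {M : Type*} [AddCommGroup M] (F g : ℕ → M) (m : M) {i N : ℕ}
    (hiN : i + 1 ≤ N) (hg : ∀ j, g j = if j < i then F j else if j = i then m else F (j + 1)) :
    ∑ j ∈ range N, g j = ∑ j ∈ range (N + 1), F j - (F i + F (i + 1)) + m := by
  induction N, hiN using Nat.le_induction with
  | base =>
    have hlow : ∑ j ∈ range i, g j = ∑ j ∈ range i, F j :=
      sum_congr rfl fun j hj => by rw [hg, if_pos (mem_range.1 hj)]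
    simp only [sum_range_succ, hlow, hg i, lt_irrefl, if_false, if_true]
    abel
  | succ N hN ih =>
    rw [sum_range_succ, ih, sum_range_succ _ (N + 1), hg N, if_neg (by omega), if_neg (by omega)]
    abel

theorem sum_smul_eq_zero_of_sum_sq_mul_nonpos {ι V : Type*} [AddCommGroup V] [Module ℝ V]
    {s : Finset ι} {w R : ι → ℝ} (x : ι → V) (hR : ∀ j ∈ s, 0 < R j)
    (h : ∑ j ∈ s, w j ^ 2 * R j ≤ 0) : ∑ j ∈ s, (w j * R j) • x j = 0 := by
  have hterm : ∀ j ∈ s, 0 ≤ w j ^ 2 * R j := fun j hj => by have := hR j hj; positivity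
  have hzero := (sum_eq_zero_iff_of_nonneg hterm).1 (le_antisymm h (sum_nonneg hterm))
  refine sum_eq_zero fun j hj => ?_
  have hw : w j = 0 := by simpa [(hR j hj).ne'] using hzero j hj
  simp [hw]

theorem merged_smul_sub_eq {V : Type*} [AddCommGroup V] [Module ℝ V] {a b : ℝ} (x y : ℝ)
    (u v p : V) (hab : a + b ≠ 0) :
    ((a * x + b * y) * (a + b)) • ((a + b)⁻¹ • (a • u + b • v) - p) =
      (a + b) • ((x * a) • (u - p)) + (a + b) • ((y * b) • (v - p)) +
        (a * b * (y - x)) • (u - v) := by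
  match_scalars <;> field_simp <;> ring

theorem inv_sqrt_smul_le_inv_sqrt_smul {V : Type*} [AddCommGroup V] [PartialOrder V]
    [IsOrderedAddMonoid V] [Module ℝ V] [PosSMulMono ℝ V] {b b' t : ℝ} {L L' : V}
    (ht : 0 < t) (hb : b' ≤ t ^ 2 * b) (hL : t • L ≤ L') (hdeg : b' ≤ 0 → L' = 0)
    (hν : 0 ≤ (√b)⁻¹ • L) : (√b)⁻¹ • L ≤ (√b')⁻¹ • L' := by
  rcases le_or_gt b' 0 with hb' | hb'
  · have hL0 : L ≤ 0 := by
      have : t • L ≤ t • 0 := by rw [smul_zero, ← hdeg hb']; exact hL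
      exact le_of_smul_le_smul_left this ht
    rw [Real.sqrt_eq_zero'.2 hb', inv_zero, zero_smul]
    exact smul_nonpos_of_nonneg_of_nonpos (inv_nonneg.2 (Real.sqrt_nonneg b)) hL0
  · have hsb : 0 < √b := Real.sqrt_pos.2 (by nlinarith)
    have hsb' : 0 < √b' := Real.sqrt_pos.2 hb'
    have hLnn : 0 ≤ L := by
      simpa [smul_smul, hsb.ne'] using smul_nonneg hsb.le hν
    have hsqrt : √b' ≤ t * √b := by
      calc √b' ≤ √(t ^ 2 * b) := Real.sqrt_le_sqrt hb
        _ = t * √b := by rw [Real.sqrt_mul (sq_nonneg t), Real.sqrt_sq ht.le]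
    have hinv : (√b)⁻¹ ≤ (√b')⁻¹ * t := by
      rw [inv_mul_eq_div, le_div_iff₀ hsb', inv_mul_eq_div, div_le_iff₀ hsb]
      linarith
    calc (√b)⁻¹ • L ≤ ((√b')⁻¹ * t) • L := smul_le_smul_of_nonneg_right hinv hLnn
      _ = (√b')⁻¹ • (t • L) := mul_smul _ _ _
      _ ≤ (√b')⁻¹ • L' := smul_le_smul_of_nonneg_left hL (inv_nonneg.2 hsb'.le)

theorem deletion_lemma_general {V : Type*} [AddCommGroup V] [PartialOrder V] [IsOrderedAddMonoid V] [Module ℝ V]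
    [OrderedSMul ℝ V]
    (N i : ℕ) (hiN : i + 1 ≤ N)
    (R : ℕ → ℝ) (q : ℕ → V) (w : ℕ → ℝ)
    (hR : ∀ h ≤ N, 0 < R h)
    (hw : ∀ a b : ℕ, a < b → b ≤ N → w a < w b)
    (hq : q (i + 1) ≤ q i)
    (qbar : V)
    (R' : ℕ → ℝ)
    (hR' : ∀ j, R' j = if j < i then R j
        else if j = i then R i + R (i + 1) else R (j + 1))
    (q' : ℕ → V)
    (hq' : ∀ j, q' j = if j < i then q j
        else if j = i then
          (R i + R (i + 1))⁻¹ • (R i • q i + R (i + 1) • q (i + 1))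
        else q (j + 1))
    (w' : ℕ → ℝ)
    (hw' : ∀ j, w' j = if j < i then (R i + R (i + 1)) * w j
        else if j = i then R i * w i + R (i + 1) * w (i + 1)
        else (R i + R (i + 1)) * w (j + 1))
    (ν ν' : V)
    (hν : ν = (Real.sqrt (∑ h ∈ Finset.range (N + 1), w h ^ 2 * R h))⁻¹ •
        ∑ h ∈ Finset.range (N + 1), (w h * R h) • (q h - qbar))
    (hν' : ν' = (Real.sqrt (∑ h ∈ Finset.range N, w' h ^ 2 * R' h))⁻¹ •
        ∑ h ∈ Finset.range N, (w' h * R' h) • (q' h - qbar))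
    (hν0 : 0 ≤ ν) :
    ν ≤ ν' := by
  have hRi : 0 < R i := hR i (by omega)
  have hRi1 : 0 < R (i + 1) := hR (i + 1) hiN
  set t := R i + R (i + 1)
  have ht : 0 < t := by positivity
  have hR'pos : ∀ j ∈ range N, 0 < R' j := fun j hj => by
    have := mem_range.1 hj
    rw [hR']
    split_ifs
    exacts [hR j (by omega), ht, hR (j + 1) (by omega)]
  have hb' : ∑ h ∈ range N, w' h ^ 2 * R' h = t ^ 2 * ∑ h ∈ range (N + 1), w h ^ 2 * R h -
      t * (R i * R (i + 1) * (w (i + 1) - w i) ^ 2) := by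
    rw [sum_range_merge (fun h => t ^ 2 * (w h ^ 2 * R h)) _
      ((R i * w i + R (i + 1) * w (i + 1)) ^ 2 * t) hiN
      fun j => by rw [hw', hR']; split_ifs <;> ring, ← mul_sum]
    ring
  have hL' : ∑ h ∈ range N, (w' h * R' h) • (q' h - qbar) =
      t • ∑ h ∈ range (N + 1), (w h * R h) • (q h - qbar) +
        (R i * R (i + 1) * (w (i + 1) - w i)) • (q i - q (i + 1)) := by
    rw [sum_range_merge (fun h => t • ((w h * R h) • (q h - qbar))) _
      (((R i * w i + R (i + 1) * w (i + 1)) * t) •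
        (t⁻¹ • (R i • q i + R (i + 1) • q (i + 1)) - qbar)) hiN
      fun j => by rw [hw', hR', hq']; split_ifs <;> simp only [mul_assoc, mul_smul],
      ← smul_sum, merged_smul_sub_eq _ _ _ _ _ ht.ne']
    abel
  have hw_le : 0 ≤ w (i + 1) - w i := sub_nonneg.2 (hw i (i + 1) (by omega) hiN).le
  subst hν hν'
  refine inv_sqrt_smul_le_inv_sqrt_smul ht ?_ ?_
    (fun h => sum_smul_eq_zero_of_sum_sq_mul_nonpos _ hR'pos h) hν0
  · rw [hb']
    exact sub_le_self _ (by positivity)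
  · rw [hL']
    exact le_add_of_nonneg_right (smul_nonneg (by positivity) (sub_nonneg.2 hq))

/-- The deletion lemma: merging two adjacent graded pieces whose reduced
Hilbert polynomials are in non-convex position (`q_{i+1} ≤ q_i`) does not
decrease the numerical invariant `ν = (Σ_h w_h (q_h − q̄) R_h)/√(Σ_h w_h² R_h)`,
provided `ν ≥ 0`. The merged data has ranks `R_i + R_{i+1}` at the merged spot,
merged polynomial `(R_i q_i + R_{i+1} q_{i+1})/(R_i + R_{i+1})`, and weights
`R·w_h` away from the merged piece and `R_i w_i + R_{i+1} w_{i+1}` at it, where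
`R = R_i + R_{i+1}`. -/
theorem deletion_lemma {V : Type*} [AddCommGroup V] [PartialOrder V] [IsOrderedAddMonoid V] [Module ℝ V]
    [OrderedSMul ℝ V]
    (N i : ℕ) (hiN : i + 1 ≤ N)
    (R : ℕ → ℝ) (q : ℕ → V) (w : ℕ → ℝ)
    (hR : ∀ h ≤ N, 0 < R h)
    (hw : ∀ a b : ℕ, a < b → b ≤ N → w a < w b)
    (hq : q (i + 1) ≤ q i)
    (qbar : V)
    (hqbar : qbar = (∑ h ∈ Finset.range (N + 1), R h)⁻¹ •
        ∑ h ∈ Finset.range (N + 1), R h • q h)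
    (R' : ℕ → ℝ)
    (hR' : ∀ j, R' j = if j < i then R j
        else if j = i then R i + R (i + 1) else R (j + 1))
    (q' : ℕ → V)
    (hq' : ∀ j, q' j = if j < i then q j
        else if j = i then
          (R i + R (i + 1))⁻¹ • (R i • q i + R (i + 1) • q (i + 1))
        else q (j + 1))
    (w' : ℕ → ℝ)
    (hw' : ∀ j, w' j = if j < i then (R i + R (i + 1)) * w j
        else if j = i then R i * w i + R (i + 1) * w (i + 1)
        else (R i + R (i + 1)) * w (j + 1))
    (ν ν' : V)
    (hν : ν = (Real.sqrt (∑ h ∈ Finset.range (N + 1), w h ^ 2 * R h))⁻¹ •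
        ∑ h ∈ Finset.range (N + 1), (w h * R h) • (q h - qbar))
    (hν' : ν' = (Real.sqrt (∑ h ∈ Finset.range N, w' h ^ 2 * R' h))⁻¹ •
        ∑ h ∈ Finset.range N, (w' h * R' h) • (q' h - qbar))
    (hν0 : 0 ≤ ν) :
    ν ≤ ν' :=
  deletion_lemma_general N i hiN R q w hR hw hq qbar R' hR' q' hq' w' hw' ν ν' hν hν' hν0
end
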